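/- Let C be a graded strongly classical 2-absorbing second submodule of M and let I = ⊕_{γ∈G} I_γ be a graded ideal of R. Then for every r, s ∈ h(R), every γ ∈ G, and every graded submodule N of M with r·s·I_γ·C ⊆ N, either r·I_γ·C ⊆ N or s·I_γ·C ⊆ N or r·s·C ⊆ N. -/

import Mathlib

open Pointwise

section GradedDefs

variable {G : Type*} [Group G] [DecidableEq G] {R : Type*} [CommRing R]
  {M : Type*} [AddCommGroup M] [Module R M]

/-- `R` is a `G`-graded commutative ring via the additive subgroups `𝒜 α`:
`R_α R_β ⊆ R_{αβ}` and `R = ⊕_{α ∈ G} R_α`. -/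
structure IsRingGrading (𝒜 : G → AddSubgroup R) : Prop where
  one_mem : (1 : R) ∈ 𝒜 1
  mul_mem : ∀ ⦃α β : G⦄ ⦃r s : R⦄, r ∈ 𝒜 α → s ∈ 𝒜 β → r * s ∈ 𝒜 (α * β)
  isInternal : DirectSum.IsInternal 𝒜

/-- `M` is a graded module over the `G`-graded ring `R`:
`R_α M_β ⊆ M_{αβ}` and `M = ⊕_{α ∈ G} M_α`. -/
structure IsModuleGrading (𝒜 : G → AddSubgroup R) (ℳ : G → AddSubgroup M) : Prop where
  smul_mem : ∀ ⦃α β : G⦄ ⦃r : R⦄ ⦃m : M⦄, r ∈ 𝒜 α → m ∈ ℳ β → r • m ∈ ℳ (α * β)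
  isInternal : DirectSum.IsInternal ℳ

/-- A submodule `N` of `M` is a graded submodule iff `N = ⊕_{α ∈ G} (N ∩ M_α)`,
equivalently, every element of `N` is a sum of homogeneous elements of `N`. -/
def IsGradedSubmodule (ℳ : G → AddSubgroup M) (N : Submodule R M) : Prop :=
  ∀ n ∈ N, n ∈ Submodule.span R {m : M | m ∈ N ∧ ∃ α, m ∈ ℳ α}

/-- An ideal `I` of `R` is a graded ideal iff `I = ⊕_{α ∈ G} (I ∩ R_α)`. -/
def IsGradedIdeal (𝒜 : G → AddSubgroup R) (I : Ideal R) : Prop :=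
  ∀ r ∈ I, r ∈ Ideal.span {s : R | s ∈ I ∧ ∃ α, s ∈ 𝒜 α}

/-- A proper graded submodule `C` of `M` is completely graded irreducible if whenever
`C = ⋂_{λ ∈ Δ} C_λ` for a family of graded submodules `C_λ`, then `C = C_β` for some `β`. -/
def CompletelyGradedIrreducible (ℳ : G → AddSubgroup M) (C : Submodule R M) : Prop :=
  IsGradedSubmodule ℳ C ∧ C ≠ ⊤ ∧
    ∀ S : Set (Submodule R M), (∀ D ∈ S, IsGradedSubmodule ℳ D) → C = sInf S → C ∈ S

/-- A non-zero graded submodule `C` of `M` is a graded classical 2-absorbing second submodule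
if whenever `r, s, t ∈ h(R)`, `U` is a completely graded irreducible submodule of `M` and
`r·s·t·C ⊆ U`, then `r·s·C ⊆ U` or `s·t·C ⊆ U` or `r·t·C ⊆ U`. -/
def IsGrClassical2AbsorbingSecond (𝒜 : G → AddSubgroup R) (ℳ : G → AddSubgroup M)
    (C : Submodule R M) : Prop :=
  C ≠ ⊥ ∧ IsGradedSubmodule ℳ C ∧
    ∀ r s t : R, (∃ α, r ∈ 𝒜 α) → (∃ β, s ∈ 𝒜 β) → (∃ γ, t ∈ 𝒜 γ) →
      ∀ U : Submodule R M, CompletelyGradedIrreducible ℳ U →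
        r • s • t • C ≤ U → (r • s • C ≤ U ∨ s • t • C ≤ U ∨ r • t • C ≤ U)

/-- A non-zero graded submodule `C` of `M` is a graded strongly classical 2-absorbing second
submodule if whenever `r, s, t ∈ h(R)`, `U₁, U₂, U₃` are completely graded irreducible
submodules of `M` and `r·s·t·C ⊆ U₁ ∩ U₂ ∩ U₃`, then `r·s·C ⊆ U₁ ∩ U₂ ∩ U₃` or
`s·t·C ⊆ U₁ ∩ U₂ ∩ U₃` or `r·t·C ⊆ U₁ ∩ U₂ ∩ U₃`. -/
def IsGrStronglyClassical2AbsorbingSecond (𝒜 : G → AddSubgroup R) (ℳ : G → AddSubgroup M)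
    (C : Submodule R M) : Prop :=
  C ≠ ⊥ ∧ IsGradedSubmodule ℳ C ∧
    ∀ r s t : R, (∃ α, r ∈ 𝒜 α) → (∃ β, s ∈ 𝒜 β) → (∃ γ, t ∈ 𝒜 γ) →
      ∀ U₁ U₂ U₃ : Submodule R M, CompletelyGradedIrreducible ℳ U₁ →
        CompletelyGradedIrreducible ℳ U₂ → CompletelyGradedIrreducible ℳ U₃ →
        r • s • t • C ≤ U₁ ⊓ U₂ ⊓ U₃ →
        (r • s • C ≤ U₁ ⊓ U₂ ⊓ U₃ ∨ s • t • C ≤ U₁ ⊓ U₂ ⊓ U₃ ∨ r • t • C ≤ U₁ ⊓ U₂ ⊓ U₃)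

/-- A non-zero graded submodule `S` of `M` is a graded weakly second submodule if whenever
`r, s ∈ h(R)`, `N` is a graded submodule of `M` and `r·s·S ⊆ N`, then `r·S ⊆ N` or `s·S ⊆ N`. -/
def IsGrWeaklySecond (𝒜 : G → AddSubgroup R) (ℳ : G → AddSubgroup M)
    (S : Submodule R M) : Prop :=
  S ≠ ⊥ ∧ IsGradedSubmodule ℳ S ∧
    ∀ r s : R, (∃ α, r ∈ 𝒜 α) → (∃ β, s ∈ 𝒜 β) →
      ∀ N : Submodule R M, IsGradedSubmodule ℳ N →
        r • s • S ≤ N → (r • S ≤ N ∨ s • S ≤ N)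

/-- A proper graded ideal `I` of `R` is a graded 2-absorbing ideal if whenever `r, s, t ∈ h(R)`
with `r·s·t ∈ I`, then `r·s ∈ I` or `r·t ∈ I` or `s·t ∈ I`. -/
def IsGr2AbsorbingIdeal (𝒜 : G → AddSubgroup R) (I : Ideal R) : Prop :=
  I ≠ ⊤ ∧ IsGradedIdeal 𝒜 I ∧
    ∀ r s t : R, (∃ α, r ∈ 𝒜 α) → (∃ β, s ∈ 𝒜 β) → (∃ γ, t ∈ 𝒜 γ) →
      r * s * t ∈ I → (r * s ∈ I ∨ r * t ∈ I ∨ s * t ∈ I)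

end GradedDefs

/-!
Suppose `r a₁ C ⊄ N` and `s a₂ C ⊄ N` for some `a₁, a₂ ∈ I_γ`. Every graded submodule is the
intersection of the completely graded irreducible submodules containing it, so it suffices to
show `r s C ⊆ U` for each such `U ⊇ N`. Choose completely graded irreducible `V₁, V₂ ⊇ N` with
`r a₁ C ⊄ V₁` and `s a₂ C ⊄ V₂`, and apply the strongly classical 2-absorbing property to
`U ∩ V₁ ∩ V₂` and the three homogeneous triples `(r, s, a₁)`, `(r, s, a₂)`, `(r, s, a₁ + a₂)`;
in the colon ideal of `C` this becomes the classical argument for 2-absorbing ideals.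
-/

theorem Submodule.mul_mem_colon_iff {R : Type*} [CommRing R] {M : Type*} [AddCommGroup M]
    [Module R M] {N K : Submodule R M} {a b : R} : a * b ∈ N.colon K ↔ a • b • K ≤ N := by
  rw [Submodule.mem_colon_iff_le, mul_smul]

section Graded

variable {G : Type*} {R : Type*} [CommRing R] {M : Type*} [AddCommGroup M] [Module R M]
  {ℳ : G → AddSubgroup M}

theorem isGradedSubmodule_sSup {S : Set (Submodule R M)} (hS : ∀ D ∈ S, IsGradedSubmodule ℳ D) :
    IsGradedSubmodule ℳ (sSup S) := by
  intro n hn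
  refine (sSup_le fun D hD => ?_ : sSup S ≤ _) hn
  intro m hm
  refine Submodule.span_mono (fun x (hx : x ∈ D ∧ _) => ?_) (hS D hD m hm)
  exact ⟨le_sSup hD hx.1, hx.2⟩

theorem completelyGradedIrreducible_of_maximal {U : Submodule R M} {x : M}
    (hU : Maximal (fun D : Submodule R M => IsGradedSubmodule ℳ D ∧ x ∉ D) U) :
    CompletelyGradedIrreducible ℳ U := by
  refine ⟨hU.prop.1, fun h => hU.prop.2 (h ▸ Submodule.mem_top), fun S hS hUS => ?_⟩
  obtain ⟨D, hDS, hxD⟩ : ∃ D ∈ S, x ∉ D := by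
    by_contra! h
    exact hU.prop.2 (hUS ▸ Submodule.mem_sInf.mpr h)
  have hUD : U ≤ D := hUS ▸ sInf_le hDS
  rwa [(hU.eq_of_le ⟨hS D hDS, hxD⟩ hUD).symm] at hDS

theorem IsGradedSubmodule.exists_completelyGradedIrreducible_of_notMem {N : Submodule R M}
    (hN : IsGradedSubmodule ℳ N) {x : M} (hx : x ∉ N) :
    ∃ U : Submodule R M, CompletelyGradedIrreducible ℳ U ∧ N ≤ U ∧ x ∉ U := by
  set P := {D : Submodule R M | IsGradedSubmodule ℳ D ∧ x ∉ D}
  have hchain : ∀ c ⊆ P, IsChain (· ≤ ·) c → ∀ y ∈ c, ∃ ub ∈ P, ∀ z ∈ c, z ≤ ub := by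
    refine fun c hc hchain y hy => ⟨sSup c, ⟨isGradedSubmodule_sSup fun D hD => (hc hD).1, ?_⟩,
      fun _ => le_sSup⟩
    rw [Submodule.mem_sSup_of_directed ⟨y, hy⟩ hchain.directedOn]
    rintro ⟨D, hD, hxD⟩
    exact (hc hD).2 hxD
  obtain ⟨U, hNU, hU⟩ := zorn_le_nonempty₀ P hchain N ⟨hN, hx⟩
  exact ⟨U, completelyGradedIrreducible_of_maximal hU, hNU, hU.prop.2⟩

theorem IsGradedSubmodule.exists_completelyGradedIrreducible_not_le {N K : Submodule R M}
    (hN : IsGradedSubmodule ℳ N) (hK : ¬K ≤ N) :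
    ∃ U : Submodule R M, CompletelyGradedIrreducible ℳ U ∧ N ≤ U ∧ ¬K ≤ U := by
  obtain ⟨x, hxK, hxN⟩ := SetLike.not_le_iff_exists.mp hK
  obtain ⟨U, hU, hNU, hxU⟩ := hN.exists_completelyGradedIrreducible_of_notMem hxN
  exact ⟨U, hU, hNU, fun hKU => hxU (hKU hxK)⟩

theorem IsGrStronglyClassical2AbsorbingSecond.mul_mem_colon {𝒜 : G → AddSubgroup R}
    {C : Submodule R M} (hC : IsGrStronglyClassical2AbsorbingSecond 𝒜 ℳ C) {r s t : R}
    (hr : ∃ α, r ∈ 𝒜 α) (hs : ∃ β, s ∈ 𝒜 β) (ht : ∃ γ, t ∈ 𝒜 γ) {U₁ U₂ U₃ : Submodule R M}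
    (h₁ : CompletelyGradedIrreducible ℳ U₁) (h₂ : CompletelyGradedIrreducible ℳ U₂)
    (h₃ : CompletelyGradedIrreducible ℳ U₃) (hrst : r * s * t ∈ (U₁ ⊓ U₂ ⊓ U₃).colon C) :
    r * s ∈ (U₁ ⊓ U₂ ⊓ U₃).colon C ∨ s * t ∈ (U₁ ⊓ U₂ ⊓ U₃).colon C ∨
      r * t ∈ (U₁ ⊓ U₂ ⊓ U₃).colon C := by
  simp only [Submodule.mem_colon_iff_le, mul_smul] at hrst ⊢
  exact hC.2.2 r s t hr hs ht U₁ U₂ U₃ h₁ h₂ h₃ hrst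

end Graded

theorem Ideal.mul_mem_of_absorbing_add {R : Type*} [CommRing R] {J : Ideal R} {r s a b : R}
    (ha : r * s ∈ J ∨ s * a ∈ J ∨ r * a ∈ J) (hb : r * s ∈ J ∨ s * b ∈ J ∨ r * b ∈ J)
    (hab : r * s ∈ J ∨ s * (a + b) ∈ J ∨ r * (a + b) ∈ J) (hra : r * a ∉ J) (hsb : s * b ∉ J) :
    r * s ∈ J := by
  obtain hrs | hsa := ha.imp_right (Or.resolve_right · hra)
  · exact hrs
  obtain hrs | hrb := hb.imp_right (Or.resolve_left · hsb)
  · exact hrs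
  obtain hrs | hsab | hrab := hab
  · exact hrs
  · exact absurd (by simpa [mul_add] using J.sub_mem hsab hsa) hsb
  · exact absurd (by simpa [mul_add] using J.sub_mem hrab hrb) hra

theorem stmt10_general {G : Type*} {R : Type*} [CommRing R]
    {M : Type*} [AddCommGroup M] [Module R M]
    (𝒜 : G → AddSubgroup R) (ℳ : G → AddSubgroup M)
    (C : Submodule R M) (hC : IsGrStronglyClassical2AbsorbingSecond 𝒜 ℳ C)
    (I : Ideal R)
    (r s : R) (hr : ∃ α, r ∈ 𝒜 α) (hs : ∃ β, s ∈ 𝒜 β) (γ : G)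
    (N : Submodule R M) (hN : IsGradedSubmodule ℳ N)
    (hsub : ∀ a : R, a ∈ I → a ∈ 𝒜 γ → r • s • a • C ≤ N) :
    (∀ a : R, a ∈ I → a ∈ 𝒜 γ → r • a • C ≤ N) ∨
      (∀ a : R, a ∈ I → a ∈ 𝒜 γ → s • a • C ≤ N) ∨ r • s • C ≤ N := by
  by_contra! ⟨⟨a₁, ha₁I, ha₁γ, hra₁⟩, ⟨a₂, ha₂I, ha₂γ, hsa₂⟩, hrs⟩
  obtain ⟨V₁, hV₁, hNV₁, hra₁V₁⟩ := hN.exists_completelyGradedIrreducible_not_le hra₁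
  obtain ⟨V₂, hV₂, hNV₂, hsa₂V₂⟩ := hN.exists_completelyGradedIrreducible_not_le hsa₂
  obtain ⟨U, hU, hNU, hrsU⟩ := hN.exists_completelyGradedIrreducible_not_le hrs
  set W := U ⊓ V₁ ⊓ V₂
  have hNW : N ≤ W := le_inf (le_inf hNU hNV₁) hNV₂
  have habsorb (a : R) (haI : a ∈ I) (haγ : a ∈ 𝒜 γ) :
      r * s ∈ W.colon C ∨ s * a ∈ W.colon C ∨ r * a ∈ W.colon C := by
    refine hC.mul_mem_colon hr hs ⟨γ, haγ⟩ hU hV₁ hV₂ ?_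
    rw [mul_assoc, Submodule.mul_mem_colon_iff, mul_smul]
    exact (hsub a haI haγ).trans hNW
  have hrsW : r * s ∈ W.colon C :=
    Ideal.mul_mem_of_absorbing_add (habsorb a₁ ha₁I ha₁γ) (habsorb a₂ ha₂I ha₂γ)
      (habsorb (a₁ + a₂) (I.add_mem ha₁I ha₂I) (add_mem ha₁γ ha₂γ))
      (fun h => hra₁V₁ ((Submodule.mul_mem_colon_iff.mp h).trans (inf_le_left.trans inf_le_right)))
      (fun h => hsa₂V₂ ((Submodule.mul_mem_colon_iff.mp h).trans inf_le_right))
  exact hrsU ((Submodule.mul_mem_colon_iff.mp hrsW).trans (inf_le_left.trans inf_le_left))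

theorem stmt10 {G : Type*} [Group G] [DecidableEq G] {R : Type*} [CommRing R]
    {M : Type*} [AddCommGroup M] [Module R M]
    (𝒜 : G → AddSubgroup R) (ℳ : G → AddSubgroup M)
    (h𝒜 : IsRingGrading 𝒜) (hℳ : IsModuleGrading 𝒜 ℳ)
    (C : Submodule R M) (hC : IsGrStronglyClassical2AbsorbingSecond 𝒜 ℳ C)
    (I : Ideal R) (hI : IsGradedIdeal 𝒜 I)
    (r s : R) (hr : ∃ α, r ∈ 𝒜 α) (hs : ∃ β, s ∈ 𝒜 β) (γ : G)
    (N : Submodule R M) (hN : IsGradedSubmodule ℳ N)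
    (hsub : ∀ a : R, a ∈ I → a ∈ 𝒜 γ → r • s • a • C ≤ N) :
    (∀ a : R, a ∈ I → a ∈ 𝒜 γ → r • a • C ≤ N) ∨
      (∀ a : R, a ∈ I → a ∈ 𝒜 γ → s • a • C ≤ N) ∨ r • s • C ≤ N :=
  stmt10_general 𝒜 ℳ C hC I r s hr hs γ N hN hsub
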